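/- The map ι : {1,...,2^n} → {1,...,2^{n+1}} defined by ι(p) = p + 2^n is a homomorphism from the Laver table of order 2^n to the Laver table of order 2^{n+1}: ι(p ⋆ₙ q) = ι(p) ⋆_{n+1} ι(q). -/

import Mathlib

/-!
For `p < 2^n`, row `p + 2^n` of the table of order `2^(n+1)` is row `p` of the table of order
`2^n`, shifted by `2^n` and repeated with period `2^n`. This goes by downward induction on `p`
and, inside a row, by induction on the column: left distributivity turns column `q + 1` of row
`p` into an entry of row `p ⋆ q`, and `p < p ⋆ q` makes the induction on rows well founded.
In the remaining row `p = 2^n`, both tables act as the identity.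
-/

def LaverAxioms (N : ℕ) (star : ℕ → ℕ → ℕ) : Prop :=
  (∀ p q, p ∈ Set.Icc 1 N → q ∈ Set.Icc 1 N → star p q ∈ Set.Icc 1 N) ∧
  (∀ p ∈ Set.Icc 1 N, star p 1 = p % N + 1) ∧
  (∀ p q, p ∈ Set.Icc 1 N → q ∈ Set.Icc 1 N →
    star p (star q 1) = star (star p q) (star p 1))

namespace LaverAxioms

variable {N : ℕ} {star : ℕ → ℕ → ℕ}

theorem star_one_of_lt (h : LaverAxioms N star) {p : ℕ} (hp : 1 ≤ p) (hpN : p < N) :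
    star p 1 = p + 1 := by
  rw [h.2.1 p ⟨hp, hpN.le⟩, Nat.mod_eq_of_lt hpN]

theorem star_self_left (h : LaverAxioms N star) {q : ℕ} (hq : 1 ≤ q) (hqN : q ≤ N) :
    star N q = q := by
  have hN1 : star N 1 = 1 := by rw [h.2.1 N ⟨hq.trans hqN, le_rfl⟩, Nat.mod_self]
  induction q, hq using Nat.le_induction with
  | base => exact hN1
  | succ q hq ih =>
    rw [← h.star_one_of_lt hq (by omega), h.2.2 N q ⟨by omega, le_rfl⟩ ⟨hq, by omega⟩,
      ih (by omega), hN1]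

theorem lt_star (h : LaverAxioms N star) {p q : ℕ} (hp : 1 ≤ p) (hpN : p < N) (hq : 1 ≤ q)
    (hqN : q ≤ N) : p < star p q := by
  induction q, hq using Nat.le_induction with
  | base => rw [h.star_one_of_lt hp hpN]; omega
  | succ q hq ih =>
    obtain ⟨hr, hrN⟩ := h.1 p q ⟨hp, hpN.le⟩ ⟨hq, by omega⟩
    have hpr := ih (by omega)
    rw [← h.star_one_of_lt hq (by omega), h.2.2 p q ⟨hp, hpN.le⟩ ⟨hq, by omega⟩,
      h.star_one_of_lt hp hpN]
    rcases hrN.eq_or_lt with hrN | hrN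
    · rw [hrN, h.star_self_left (by omega) (by omega)]
      omega
    · exact hpr.trans (h.lt_star hr hrN (by omega) (by omega))
termination_by N - p

-- Columns are indexed by `k + 1` so that `k % M + 1` is the representative of `k + 1` in `[1, M]`.
theorem upper_row_eq {M : ℕ} {S B : ℕ → ℕ → ℕ} (hS : LaverAxioms M S)
    (hB : LaverAxioms (2 * M) B) {p : ℕ} (hp : 1 ≤ p) (hpM : p < M) {k : ℕ} (hk : k < 2 * M) :
    B (p + M) (k + 1) = S p (k % M + 1) + M := by
  induction k with
  | zero =>
    rw [hB.star_one_of_lt (by omega) (by omega), Nat.zero_mod, hS.star_one_of_lt hp hpM]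
    omega
  | succ k ih =>
    have hkM : k % M + 1 ≤ M := Nat.mod_lt k (by omega)
    have hBdist := hB.2.2 (p + M) (k + 1) ⟨by omega, by omega⟩ ⟨by omega, by omega⟩
    rw [hB.star_one_of_lt (by omega) (by omega), hB.star_one_of_lt (by omega) (by omega),
      ih (by omega)] at hBdist
    have hSdist := hS.2.2 p (k % M + 1) ⟨hp, hpM.le⟩ ⟨by omega, hkM⟩
    rw [hS.2.1 _ ⟨by omega, hkM⟩, hS.star_one_of_lt hp hpM, Nat.mod_add_mod] at hSdist
    rw [hBdist, hSdist]
    obtain ⟨hr, hrM⟩ := hS.1 p (k % M + 1) ⟨hp, hpM.le⟩ ⟨by omega, hkM⟩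
    have hpr := hS.lt_star hp hpM (by omega) hkM
    rcases hrM.eq_or_lt with hrM | hrM
    · rw [hrM, ← two_mul, hB.star_self_left (by omega) (by omega),
        hS.star_self_left (by omega) (by omega)]
      omega
    · have hr_row := upper_row_eq hS hB hr hrM (k := p + M) (by omega)
      rwa [Nat.add_mod_right, Nat.mod_eq_of_lt hpM] at hr_row
termination_by M - p

end LaverAxioms

/-- the map ι(p) = p + 2^n is a homomorphism from the Laver table of
order 2^n to the Laver table of order 2^{n+1}: ι(p ⋆ₙ q) = ι(p) ⋆_{n+1} ι(q). -/
theorem laver_shift_hom (n : ℕ) (starSmall starBig : ℕ → ℕ → ℕ)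
    (hS : LaverAxioms (2 ^ n) starSmall) (hB : LaverAxioms (2 ^ (n + 1)) starBig) :
    ∀ p ∈ Set.Icc 1 (2 ^ n), ∀ q ∈ Set.Icc 1 (2 ^ n),
      starSmall p q + 2 ^ n = starBig (p + 2 ^ n) (q + 2 ^ n) := by
  rw [pow_succ'] at hB
  rintro p ⟨hp, hpM⟩ q ⟨hq, hqM⟩
  rcases hpM.eq_or_lt with rfl | hpM
  · rw [hS.star_self_left hq hqM, ← two_mul, hB.star_self_left (by omega) (by omega)]
  · obtain ⟨k, rfl⟩ := Nat.exists_eq_add_of_le' hq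
    have hrow := LaverAxioms.upper_row_eq hS hB hp hpM (k := k + 2 ^ n) (by omega)
    rwa [Nat.add_mod_right, Nat.mod_eq_of_lt (by omega), add_right_comm, eq_comm] at hrow
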